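/- For the IRLS iteration Q_{k+1} = T(Q_k), the objective is monotone: F(Q_{k+1}) ≤ F(Q_k), where the decrease is controlled by F(Q_k) − F(Q_{k+1}) ≥ (1/2) Σ_{i∉I(Q_k)} ‖(Q_k − Q_{k+1}) x_i‖² / ‖Q_k x_i‖. -/
import Mathlib


open Matrix Finset
open scoped Classical

/-- Euclidean norm of a vector in `ℝ^D`. -/
noncomputable def euclNorm {D : ℕ} (v : Fin D → ℝ) : ℝ := Real.sqrt (∑ j, v j ^ 2)

lemma euclNorm_nonneg {D : ℕ} (v : Fin D → ℝ) : 0 ≤ euclNorm v := Real.sqrt_nonneg _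

lemma euclNorm_sq {D : ℕ} (v : Fin D → ℝ) : euclNorm v ^ 2 = ∑ j, v j ^ 2 :=
  Real.sq_sqrt (Finset.sum_nonneg fun j _ => sq_nonneg _)

lemma euclNorm_zero {D : ℕ} : euclNorm (0 : Fin D → ℝ) = 0 := by
  simp [euclNorm]

lemma euclNorm_pos {D : ℕ} {v : Fin D → ℝ} (hv : v ≠ 0) : 0 < euclNorm v := by
  rcases Function.ne_iff.mp hv with ⟨j, hj⟩
  apply Real.sqrt_pos.mpr
  apply Finset.sum_pos' (fun k _ => sq_nonneg _) ⟨j, Finset.mem_univ j, pow_two_pos_of_ne_zero hj⟩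

/-- The IRLS surrogate `G(Q, Q*) = (1/2) Σ_{i ∉ I(Q*)} (‖Qxᵢ‖²/‖Q*xᵢ‖ + ‖Q*xᵢ‖)`. -/
noncomputable def Gsur {D N : ℕ} (x : Fin N → Fin D → ℝ)
    (Q Qstar : Matrix (Fin D) (Fin D) ℝ) : ℝ :=
  (1 / 2) * ∑ i ∈ Finset.univ.filter (fun i => Qstar.mulVec (x i) ≠ 0),
    (euclNorm (Q.mulVec (x i)) ^ 2 / euclNorm (Qstar.mulVec (x i)) +
      euclNorm (Qstar.mulVec (x i)))

/-- Monotonicity of the IRLS iteration: if `Q_{k+1}` minimizes `G(·, Q_k)` over symmetric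
trace-one matrices vanishing on `span{xᵢ : Q_k xᵢ = 0}`, then
`F(Q_{k+1}) ≤ F(Q_k)` and
`F(Q_k) − F(Q_{k+1}) ≥ (1/2) Σ_{i ∉ I(Q_k)} ‖(Q_k − Q_{k+1})xᵢ‖²/‖Q_k xᵢ‖`. -/
theorem stmt9 {D N : ℕ} (x : Fin N → Fin D → ℝ) (Qk Qk1 : Matrix (Fin D) (Fin D) ℝ)
    (hk : Qk.IsSymm ∧ Qk.trace = 1) (h1 : Qk1.IsSymm ∧ Qk1.trace = 1)
    (hker : ∀ i, Qk.mulVec (x i) = 0 → Qk1.mulVec (x i) = 0)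
    (hminG : ∀ Q : Matrix (Fin D) (Fin D) ℝ, Q.IsSymm → Q.trace = 1 →
      (∀ i, Qk.mulVec (x i) = 0 → Q.mulVec (x i) = 0) →
      Gsur x Qk1 Qk ≤ Gsur x Q Qk) :
    (∑ i, euclNorm (Qk1.mulVec (x i)) ≤ ∑ i, euclNorm (Qk.mulVec (x i))) ∧
    (∑ i, euclNorm (Qk.mulVec (x i)) - ∑ i, euclNorm (Qk1.mulVec (x i)) ≥
      (1 / 2) * ∑ i ∈ Finset.univ.filter (fun i => Qk.mulVec (x i) ≠ 0),
        euclNorm ((Qk - Qk1).mulVec (x i)) ^ 2 / euclNorm (Qk.mulVec (x i))) := by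
  set S : Finset (Fin N) := Finset.univ.filter (fun i => Qk.mulVec (x i) ≠ 0) with hS
  set a : Fin N → ℝ := fun i => euclNorm (Qk.mulVec (x i)) with ha'
  set b : Fin N → ℝ := fun i => euclNorm (Qk1.mulVec (x i)) with hb'
  set w : Fin N → Fin D → ℝ := fun i => Qk.mulVec (x i) - Qk1.mulVec (x i) with hw'
  have hSmem : ∀ i, i ∈ S ↔ Qk.mulVec (x i) ≠ 0 := by
    intro i; simp [hS]
  have ha : ∀ i ∈ S, 0 < a i := fun i hi => euclNorm_pos ((hSmem i).mp hi)
  set c : ℝ := ∑ i ∈ S, (∑ j, Qk1.mulVec (x i) j * w i j) / a i with hc'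
  set q : ℝ := (1/2) * ∑ i ∈ S, euclNorm ((Qk - Qk1).mulVec (x i)) ^ 2 / a i with hq'
  -- norm square of (Qk - Qk1).mulVec
  have hwsq : ∀ i, euclNorm ((Qk - Qk1).mulVec (x i)) ^ 2 = ∑ j, w i j ^ 2 := by
    intro i
    rw [euclNorm_sq, Matrix.sub_mulVec]
  -- the line through Qk1 towards Qk
  have hline : ∀ t : ℝ, Gsur x (Qk1 + t • (Qk - Qk1)) Qk
      = Gsur x Qk1 Qk + t * c + t ^ 2 * q := by
    intro t
    have key : ∀ i ∈ S,
        euclNorm ((Qk1 + t • (Qk - Qk1)).mulVec (x i)) ^ 2 / a i + a i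
        = (euclNorm (Qk1.mulVec (x i)) ^ 2 / a i + a i)
          + t * (2 * ((∑ j, Qk1.mulVec (x i) j * w i j) / a i))
          + t ^ 2 * (euclNorm ((Qk - Qk1).mulVec (x i)) ^ 2 / a i) := by
      intro i hi
      have hmv : (Qk1 + t • (Qk - Qk1)).mulVec (x i)
          = fun j => Qk1.mulVec (x i) j + t * w i j := by
        funext j
        simp [Matrix.add_mulVec, Matrix.smul_mulVec, Matrix.sub_mulVec, hw',
          Pi.sub_apply, mul_comm]
      rw [hmv, euclNorm_sq, euclNorm_sq, hwsq]
      have expand : ∑ j, (Qk1.mulVec (x i) j + t * w i j) ^ 2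
          = (∑ j, Qk1.mulVec (x i) j ^ 2) + t * (2 * ∑ j, Qk1.mulVec (x i) j * w i j)
            + t ^ 2 * ∑ j, w i j ^ 2 := by
        rw [Finset.mul_sum, Finset.mul_sum, Finset.mul_sum, ← Finset.sum_add_distrib,
          ← Finset.sum_add_distrib]
        exact Finset.sum_congr rfl fun j _ => by ring
      rw [expand]
      ring
    unfold Gsur
    rw [← hS, Finset.sum_congr rfl key, Finset.sum_add_distrib, Finset.sum_add_distrib]
    simp only [show ∀ i, euclNorm (Qk *ᵥ x i) = a i from fun _ => rfl,
      ← Finset.mul_sum]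
    ring
  -- feasibility of the line gives nonnegativity of the quadratic
  have hfeas : ∀ t : ℝ, 0 ≤ t * c + t ^ 2 * q := by
    intro t
    have hsym : (Qk1 + t • (Qk - Qk1)).IsSymm := by
      unfold Matrix.IsSymm at *
      rw [Matrix.transpose_add, Matrix.transpose_smul, Matrix.transpose_sub, hk.1, h1.1]
    have htr : (Qk1 + t • (Qk - Qk1)).trace = 1 := by
      simp [Matrix.trace_add, Matrix.trace_smul, Matrix.trace_sub, hk.2, h1.2]
    have hker' : ∀ i, Qk.mulVec (x i) = 0 → (Qk1 + t • (Qk - Qk1)).mulVec (x i) = 0 := by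
      intro i hi
      rw [Matrix.add_mulVec, Matrix.smul_mulVec, Matrix.sub_mulVec, hker i hi, hi]
      simp
    have h := hminG _ hsym htr hker'
    rw [hline t] at h
    linarith
  have hq : 0 ≤ q := by
    rw [hq']
    exact mul_nonneg (by norm_num)
      (Finset.sum_nonneg fun i hi => div_nonneg (sq_nonneg _) (ha i hi).le)
  have hc0 : c = 0 := by
    have h := hfeas (-c / (q + 1))
    have hq1 : (0:ℝ) < q + 1 := by linarith
    have hne : q + 1 ≠ 0 := hq1.ne'
    have key : (-c/(q+1)) * c + (-c/(q+1)) ^ 2 * q = -(c ^ 2 / (q+1) ^ 2) := by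
      field_simp
      ring
    rw [key] at h
    have h5 : 0 ≤ c ^ 2 / (q+1) ^ 2 := div_nonneg (sq_nonneg c) (sq_nonneg _)
    have h6 : c ^ 2 / (q+1) ^ 2 = 0 := le_antisymm (by linarith) h5
    rcases div_eq_zero_iff.mp h6 with h7 | h7
    · exact sq_eq_zero_iff.mp h7
    · exact absurd (sq_eq_zero_iff.mp h7) hne
  have hG1 : Gsur x Qk Qk = Gsur x Qk1 Qk + q := by
    have h := hline 1
    rw [one_smul, add_sub_cancel, hc0] at h
    linarith
  have hGkk : Gsur x Qk Qk = ∑ i ∈ S, a i := by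
    unfold Gsur
    rw [← hS, Finset.mul_sum]
    refine Finset.sum_congr rfl fun i hi => ?_
    have hai := (ha i hi).ne'
    show (1:ℝ)/2 * (a i ^ 2 / a i + a i) = a i
    field_simp
    ring
  have hFa : ∑ i, a i = ∑ i ∈ S, a i := by
    refine (Finset.sum_subset (Finset.subset_univ S) fun i _ hi => ?_).symm
    have : Qk.mulVec (x i) = 0 := by
      by_contra h
      exact hi ((hSmem i).mpr h)
    show euclNorm (Qk.mulVec (x i)) = 0
    rw [this, euclNorm_zero]
  have hFb : ∑ i, b i = ∑ i ∈ S, b i := by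
    refine (Finset.sum_subset (Finset.subset_univ S) fun i _ hi => ?_).symm
    have h0 : Qk.mulVec (x i) = 0 := by
      by_contra h
      exact hi ((hSmem i).mpr h)
    show euclNorm (Qk1.mulVec (x i)) = 0
    rw [hker i h0, euclNorm_zero]
  have hbG : ∑ i ∈ S, b i ≤ Gsur x Qk1 Qk := by
    unfold Gsur
    rw [← hS, Finset.mul_sum]
    refine Finset.sum_le_sum fun i hi => ?_
    have hai := ha i hi
    have key : (1:ℝ)/2 * (b i ^ 2 / a i + a i) = b i + (a i - b i) ^ 2 / (2 * a i) := by
      field_simp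
      ring
    have h2 : 0 ≤ (a i - b i) ^ 2 / (2 * a i) := div_nonneg (sq_nonneg _) (by linarith)
    show b i ≤ (1:ℝ)/2 * (b i ^ 2 / a i + a i)
    linarith
  constructor
  · rw [hFa, hFb]
    linarith
  · rw [ge_iff_le, hFa, hFb]
    linarith
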